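/- (Jacobi–Anger expansion, sine part.) For all τ, θ ∈ ℝ, the series 2·Σ_{m=0}^{∞} J_{2m+1}(τ)·sin((2m+1)θ) converges absolutely and equals sin(τ·sin θ). -/

import Mathlib

/-!
`sin (τ sin θ) = Im exp (z + w)` with `z = (τ/2) e^{iθ}` and `w = -(τ/2) e^{-iθ}`. Multiplying
the exponential series of `z` and `w` gives an absolutely convergent double series whose
`(a, b)` term has frequency `a - b`. Grouping it by `n = a - b ∈ ℤ` turns the fibre of `±k` into
`J_k(τ) sin (kθ)` up to the sign `±(-1)^k`, so folding `ℤ` onto `ℕ` leaves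
`(1 - (-1)^k) J_k(τ) sin (kθ)`, which vanishes for even `k` and is twice the claimed term for
odd `k`.
-/

open Real

/-- The Bessel function of the first kind of (natural) order `k`. -/
noncomputable def besselJ (k : ℕ) (τ : ℝ) : ℝ :=
  ∑' m : ℕ, (-1 : ℝ) ^ m * (τ / 2) ^ (2 * m + k) /
    ((m.factorial : ℝ) * ((m + k).factorial : ℝ))

lemma hasSum_pow_div_factorial_mul_pow_div_factorial (z w : ℂ) :
    HasSum (fun p : ℕ × ℕ => z ^ p.1 / p.1.factorial * (w ^ p.2 / p.2.factorial))
      (Complex.exp (z + w)) := by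
  have hnorm (x : ℂ) : Summable fun n : ℕ => ‖x ^ n / n.factorial‖ := by
    simpa [norm_div, norm_pow, Complex.norm_natCast] using Real.summable_pow_div_factorial ‖x‖
  have hprod := summable_mul_of_summable_norm (hnorm z) (hnorm w)
  rw [Complex.exp_add, Complex.exp_eq_exp_ℂ, ← (NormedSpace.expSeries_div_hasSum_exp z).tsum_eq,
    ← (NormedSpace.expSeries_div_hasSum_exp w).tsum_eq,
    tsum_mul_tsum_of_summable_norm (hnorm z) (hnorm w)]
  exact hprod.hasSum

lemma hasSum_comp_two_mul_add_one_iff {M : Type*} [AddCommMonoid M] [TopologicalSpace M]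
    {f : ℕ → M} {a : M} (hf : ∀ m, f (2 * m) = 0) :
    HasSum (fun m => f (2 * m + 1)) a ↔ HasSum f a :=
  (show Function.Injective fun m : ℕ => 2 * m + 1 from fun _ _ h => by simpa using h).hasSum_iff
    fun n hn => by
      obtain ⟨m, rfl | rfl⟩ := Nat.even_or_odd' n
      · exact hf m
      · exact absurd ⟨m, rfl⟩ hn

/-- The inverse of `(a, b) ↦ (a - b, min a b)`. -/
def intProdNatEquiv : ℤ × ℕ ≃ ℕ × ℕ where
  toFun q := (q.2 + q.1.toNat, q.2 + (-q.1).toNat)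
  invFun p := ((p.1 : ℤ) - p.2, min p.1 p.2)
  left_inv := fun ⟨n, j⟩ => by
    simp only [Prod.mk.injEq]
    omega
  right_inv := fun ⟨a, b⟩ => by
    simp only [Prod.mk.injEq]
    omega

lemma intProdNatEquiv_natCast (k j : ℕ) : intProdNatEquiv ((k : ℤ), j) = (j + k, j) := by
  simp [intProdNatEquiv]

lemma intProdNatEquiv_neg_natCast (k j : ℕ) : intProdNatEquiv (-(k : ℤ), j) = (j, j + k) := by
  simp [intProdNatEquiv]

namespace JacobiAnger

variable (τ θ : ℝ)

noncomputable def term (p : ℕ × ℕ) : ℝ :=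
  (-1) ^ p.2 * (τ / 2) ^ (p.1 + p.2) / (p.1.factorial * p.2.factorial) *
    sin ((p.1 - p.2 : ℝ) * θ)

lemma im_pow_div_factorial_mul_pow_div_factorial (a b : ℕ) :
    (((τ / 2 : ℂ) * Complex.exp (θ * Complex.I)) ^ a / a.factorial *
      ((-(τ / 2 : ℂ) * Complex.exp (-θ * Complex.I)) ^ b / b.factorial)).im =
      term τ θ (a, b) := by
  have hexp : Complex.exp (θ * Complex.I) ^ a * Complex.exp (-θ * Complex.I) ^ b =
      Complex.exp (((a - b : ℝ) * θ : ℝ) * Complex.I) := by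
    rw [← Complex.exp_nat_mul, ← Complex.exp_nat_mul, ← Complex.exp_add]
    push_cast
    ring_nf
  have h : ((τ / 2 : ℂ) * Complex.exp (θ * Complex.I)) ^ a / a.factorial *
      ((-(τ / 2 : ℂ) * Complex.exp (-θ * Complex.I)) ^ b / b.factorial) =
      (((-1) ^ b * (τ / 2) ^ (a + b) / (a.factorial * b.factorial) : ℝ) : ℂ) *
        (Complex.exp (θ * Complex.I) ^ a * Complex.exp (-θ * Complex.I) ^ b) := by
    rw [neg_mul, neg_pow]
    push_cast
    ring
  rw [h, hexp, Complex.im_ofReal_mul, Complex.exp_ofReal_mul_I_im, term]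

lemma hasSum_term : HasSum (term τ θ) (sin (τ * sin θ)) := by
  have hsum : (τ / 2 : ℂ) * Complex.exp (θ * Complex.I) +
      -(τ / 2 : ℂ) * Complex.exp (-θ * Complex.I) = ((τ * sin θ : ℝ) : ℂ) * Complex.I := by
    rw [Complex.exp_mul_I, Complex.exp_mul_I, Complex.cos_neg, Complex.sin_neg]
    push_cast
    ring
  have h := Complex.hasSum_im (hasSum_pow_div_factorial_mul_pow_div_factorial
    ((τ / 2 : ℂ) * Complex.exp (θ * Complex.I)) (-(τ / 2 : ℂ) * Complex.exp (-θ * Complex.I)))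
  rw [hsum, Complex.exp_ofReal_mul_I_im] at h
  simpa only [im_pow_div_factorial_mul_pow_div_factorial] using h

lemma tsum_term_natCast (k : ℕ) :
    ∑' j : ℕ, term τ θ (intProdNatEquiv ((k : ℤ), j)) = besselJ k τ * sin (k * θ) := by
  rw [besselJ, ← tsum_mul_right]
  congr 1 with j
  rw [intProdNatEquiv_natCast, term]
  push_cast
  ring_nf

lemma tsum_term_neg_natCast (k : ℕ) :
    ∑' j : ℕ, term τ θ (intProdNatEquiv (-(k : ℤ), j)) =
      -(-1) ^ k * (besselJ k τ * sin (k * θ)) := by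
  rw [besselJ, ← tsum_mul_right, ← tsum_mul_left]
  congr 1 with j
  rw [intProdNatEquiv_neg_natCast, term]
  push_cast
  rw [show ((j : ℝ) - (j + k)) * θ = -(k * θ) by ring, sin_neg]
  ring_nf

end JacobiAnger

open JacobiAnger in
theorem jacobi_anger_sin (τ θ : ℝ) :
    Summable (fun m : ℕ => |2 * besselJ (2 * m + 1) τ * Real.sin ((2 * m + 1 : ℕ) * θ)|) ∧
    ∑' m : ℕ, 2 * besselJ (2 * m + 1) τ * Real.sin ((2 * m + 1 : ℕ) * θ) =
      Real.sin (τ * Real.sin θ) := by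
  have hprod := intProdNatEquiv.hasSum_iff.mpr (hasSum_term τ θ)
  have hfiber :
      HasSum (fun n : ℤ => ∑' j : ℕ, term τ θ (intProdNatEquiv (n, j))) (sin (τ * sin θ)) :=
    hprod.prod_fiberwise fun n => (hprod.summable.prod_factor n).hasSum
  have h0 : ∑' j : ℕ, term τ θ (intProdNatEquiv (0, j)) = 0 := by
    simpa using tsum_term_natCast τ θ 0
  have hfold : HasSum (fun k : ℕ => (1 - (-1) ^ k) * (besselJ k τ * sin (k * θ)))
      (sin (τ * sin θ)) := by
    convert hfiber.nat_add_neg using 1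
    · ext k
      rw [tsum_term_natCast, tsum_term_neg_natCast]
      ring
    · rw [h0, add_zero]
  have hodd : HasSum (fun m : ℕ => 2 * besselJ (2 * m + 1) τ * sin ((2 * m + 1 : ℕ) * θ))
      (sin (τ * sin θ)) := by
    refine ((hasSum_comp_two_mul_add_one_iff fun m => ?_).mpr hfold).congr_fun fun m => ?_
    · rw [pow_mul, neg_one_sq, one_pow, sub_self, zero_mul]
    · rw [pow_succ, pow_mul, neg_one_sq, one_pow]
      push_cast
      ring
  exact ⟨summable_abs_iff.mpr hodd.summable, hodd.tsum_eq⟩
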